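/- Let (A_h,≼_h)_{h≥1} be a consistent family of finite rooted permutations, i.e., each (A_h,≼_h) ∈ S• and r_h(A_{h+1},≼_{h+1}) = (A_h,≼_h) for all h ≥ 1. Then there exists a unique rooted permutation (A,≼) ∈ S̃• such that r_h(A,≼) = (A_h,≼_h) for all h ≥ 1; moreover (A_h,≼_h) → (A,≼) with respect to the local distance d. -/
import Mathlib


open Filter
open scoped Topology Classical

noncomputable section

/-- A (finite or infinite) **rooted permutation**: a pair `(A,≼)` where `A ⊆ ℤ` is an
integer interval containing `0` and `≼` is a total order on `A`.  The order is encoded by a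
relation `r` on `ℤ` supported on `A` which is reflexive, antisymmetric, transitive and total
on `A`. -/
structure RootedPerm where
  A : Set ℤ
  mem0 : 0 ∈ A
  conn : ∀ {x y z : ℤ}, x ∈ A → z ∈ A → x ≤ y → y ≤ z → y ∈ A
  r : ℤ → ℤ → Prop
  supp : ∀ {x y : ℤ}, r x y → x ∈ A ∧ y ∈ A
  refl : ∀ {x : ℤ}, x ∈ A → r x x
  antisymm : ∀ {x y : ℤ}, r x y → r y x → x = y
  trans : ∀ {x y z : ℤ}, r x y → r y z → r x z
  total : ∀ {x y : ℤ}, x ∈ A → y ∈ A → r x y ∨ r y x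

/-- The restriction `r_h(A,≼) = (A ∩ [−h,h], ≼)` around the root. -/
def RootedPerm.restrict (h : ℕ) (P : RootedPerm) : RootedPerm where
  A := P.A ∩ Set.Icc (-(h : ℤ)) (h : ℤ)
  mem0 := ⟨P.mem0, by simp only [Set.mem_Icc]; omega⟩
  conn := by
    intro x y z hx hz hxy hyz
    refine ⟨P.conn hx.1 hz.1 hxy hyz, ?_⟩
    have hx2 := hx.2
    have hz2 := hz.2
    simp only [Set.mem_Icc] at *
    omega
  r := fun x y => P.r x y ∧ x ∈ Set.Icc (-(h : ℤ)) (h : ℤ) ∧ y ∈ Set.Icc (-(h : ℤ)) (h : ℤ)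
  supp := by
    intro x y hxy
    exact ⟨⟨(P.supp hxy.1).1, hxy.2.1⟩, ⟨(P.supp hxy.1).2, hxy.2.2⟩⟩
  refl := fun hx => ⟨P.refl hx.1, hx.2, hx.2⟩
  antisymm := fun hxy hyx => P.antisymm hxy.1 hyx.1
  trans := fun hxy hyz => ⟨P.trans hxy.1 hyz.1, hxy.2.1, hyz.2.2⟩
  total := by
    intro x y hx hy
    rcases P.total hx.1 hy.1 with h' | h'
    · exact Or.inl ⟨h', hx.2, hy.2⟩
    · exact Or.inr ⟨h', hy.2, hx.2⟩

/-- The local distance `d((A₁,≼₁),(A₂,≼₂)) = 2^(−sup{h ≥ 1 : r_h(A₁,≼₁) = r_h(A₂,≼₂)})`,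
with the conventions `sup ∅ = 0`, `sup ℤ_{>0} = +∞`, `2^(−∞) = 0`. -/
def localDist (P Q : RootedPerm) : ℝ :=
  if ∀ h : ℕ, 1 ≤ h → RootedPerm.restrict h P = RootedPerm.restrict h Q then 0
  else (2 : ℝ)⁻¹ ^ sSup {h : ℕ | 1 ≤ h ∧ RootedPerm.restrict h P = RootedPerm.restrict h Q}

end

/-- Extensionality for rooted permutations. -/
theorem RootedPerm.ext' {P Q : RootedPerm} (hA : P.A = Q.A) (hr : P.r = Q.r) : P = Q := by
  cases P; cases Q
  cases hA; cases hr
  rfl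

theorem Icc_mono_int {h k : ℕ} (hhk : h ≤ k) :
    Set.Icc (-(h : ℤ)) (h : ℤ) ⊆ Set.Icc (-(k : ℤ)) (k : ℤ) := by
  intro x hx
  simp only [Set.mem_Icc] at *
  omega

theorem restrict_restrict (P : RootedPerm) {h k : ℕ} (hhk : h ≤ k) :
    RootedPerm.restrict h (RootedPerm.restrict k P) = RootedPerm.restrict h P := by
  have hsub := Icc_mono_int hhk
  apply RootedPerm.ext'
  · show (P.A ∩ _) ∩ _ = P.A ∩ _
    ext x
    constructor
    · rintro ⟨⟨h1, _⟩, h2⟩; exact ⟨h1, h2⟩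
    · rintro ⟨h1, h2⟩; exact ⟨⟨h1, hsub h2⟩, h2⟩
  · funext x y
    apply propext
    show (P.r x y ∧ _ ∧ _) ∧ _ ∧ _ ↔ P.r x y ∧ _ ∧ _
    constructor
    · rintro ⟨⟨hr, _, _⟩, hx, hy⟩; exact ⟨hr, hx, hy⟩
    · rintro ⟨hr, hx, hy⟩; exact ⟨⟨hr, hsub hx, hsub hy⟩, hx, hy⟩

theorem restrict_eq_self {P : RootedPerm} {k : ℕ}
    (hsub : P.A ⊆ Set.Icc (-(k : ℤ)) (k : ℤ)) :
    RootedPerm.restrict k P = P := by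
  apply RootedPerm.ext'
  · show P.A ∩ _ = P.A
    exact Set.inter_eq_left.2 hsub
  · funext x y
    apply propext
    show P.r x y ∧ _ ∧ _ ↔ P.r x y
    constructor
    · exact fun h => h.1
    · intro h
      exact ⟨h, hsub (P.supp h).1, hsub (P.supp h).2⟩


/-- Two rooted permutations with the same restrictions at every scale are equal. -/
theorem eq_of_restrict_eq {P Q : RootedPerm}
    (hPQ : ∀ h : ℕ, 1 ≤ h → RootedPerm.restrict h Q = RootedPerm.restrict h P) : Q = P := by
  have key : ∀ x : ℤ, ∃ h : ℕ, 1 ≤ h ∧ x ∈ Set.Icc (-(h : ℤ)) (h : ℤ) := by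
    intro x
    refine ⟨max 1 x.natAbs, le_max_left _ _, ?_⟩
    have h1 : (x.natAbs : ℤ) ≤ ((max 1 x.natAbs : ℕ) : ℤ) := by
      exact_mod_cast le_max_right 1 x.natAbs
    simp only [Set.mem_Icc]
    omega
  apply RootedPerm.ext'
  · ext x
    obtain ⟨h, hh, hx⟩ := key x
    constructor
    · intro hxQ
      have : x ∈ (RootedPerm.restrict h Q).A := ⟨hxQ, hx⟩
      rw [hPQ h hh] at this
      exact this.1
    · intro hxP
      have : x ∈ (RootedPerm.restrict h P).A := ⟨hxP, hx⟩
      rw [← hPQ h hh] at this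
      exact this.1
  · funext x y
    apply propext
    obtain ⟨h1, hh1, hx⟩ := key x
    obtain ⟨h2, hh2, hy⟩ := key y
    set h := max h1 h2 with hdef
    have hh : 1 ≤ h := le_trans hh1 (le_max_left _ _)
    have hx' : x ∈ Set.Icc (-(h : ℤ)) (h : ℤ) := Icc_mono_int (le_max_left _ _) hx
    have hy' : y ∈ Set.Icc (-(h : ℤ)) (h : ℤ) := Icc_mono_int (le_max_right _ _) hy
    constructor
    · intro hxy
      have : (RootedPerm.restrict h Q).r x y := ⟨hxy, hx', hy'⟩
      rw [hPQ h hh] at this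
      exact this.1
    · intro hxy
      have : (RootedPerm.restrict h P).r x y := ⟨hxy, hx', hy'⟩
      rw [← hPQ h hh] at this
      exact this.1

/-- The limit rooted permutation of a monotone family. -/
def limitPerm (F : ℕ → RootedPerm)
    (hA_mono : ∀ h k : ℕ, 1 ≤ h → h ≤ k → (F h).A ⊆ (F k).A)
    (hr_mono : ∀ h k : ℕ, 1 ≤ h → h ≤ k → ∀ x y : ℤ, (F h).r x y → (F k).r x y) :
    RootedPerm where
  A := {x | ∃ h : ℕ, 1 ≤ h ∧ x ∈ (F h).A}
  mem0 := ⟨1, le_refl 1, (F 1).mem0⟩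
  conn := by
    rintro x y z ⟨h1, hh1, hx⟩ ⟨h2, hh2, hz⟩ hxy hyz
    refine ⟨max h1 h2, le_trans hh1 (le_max_left _ _), ?_⟩
    exact (F (max h1 h2)).conn (hA_mono h1 _ hh1 (le_max_left _ _) hx)
      (hA_mono h2 _ hh2 (le_max_right _ _) hz) hxy hyz
  r := fun x y => ∃ h : ℕ, 1 ≤ h ∧ (F h).r x y
  supp := by
    rintro x y ⟨h, hh, hxy⟩
    exact ⟨⟨h, hh, ((F h).supp hxy).1⟩, ⟨h, hh, ((F h).supp hxy).2⟩⟩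
  refl := by
    rintro x ⟨h, hh, hx⟩
    exact ⟨h, hh, (F h).refl hx⟩
  antisymm := by
    rintro x y ⟨h1, hh1, hxy⟩ ⟨h2, hh2, hyx⟩
    exact (F (max h1 h2)).antisymm
      (hr_mono h1 _ hh1 (le_max_left _ _) _ _ hxy)
      (hr_mono h2 _ hh2 (le_max_right _ _) _ _ hyx)
  trans := by
    rintro x y z ⟨h1, hh1, hxy⟩ ⟨h2, hh2, hyz⟩
    refine ⟨max h1 h2, le_trans hh1 (le_max_left _ _), ?_⟩
    exact (F (max h1 h2)).trans
      (hr_mono h1 _ hh1 (le_max_left _ _) _ _ hxy)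
      (hr_mono h2 _ hh2 (le_max_right _ _) _ _ hyz)
  total := by
    rintro x y ⟨h1, hh1, hx⟩ ⟨h2, hh2, hy⟩
    have hm1 : 1 ≤ max h1 h2 := le_trans hh1 (le_max_left _ _)
    rcases (F (max h1 h2)).total (hA_mono h1 _ hh1 (le_max_left _ _) hx)
      (hA_mono h2 _ hh2 (le_max_right _ _) hy) with h' | h'
    · exact Or.inl ⟨_, hm1, h'⟩
    · exact Or.inr ⟨_, hm1, h'⟩

/-- **Proposition 2.9.** Given a consistent family `(A_h,≼_h)_{h ≥ 1}` of finite rooted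
permutations (i.e. `r_h(A_{h+1},≼_{h+1}) = (A_h,≼_h)` for all `h ≥ 1`), there exists a
unique rooted permutation `(A,≼)` with `r_h(A,≼) = (A_h,≼_h)` for all `h ≥ 1`; moreover
`(A_h,≼_h) → (A,≼)` for the local distance. -/
theorem consistent_family_has_unique_limit
    (F : ℕ → RootedPerm)
    (hfin : ∀ h : ℕ, 1 ≤ h → (F h).A.Finite)
    (hcons : ∀ h : ℕ, 1 ≤ h → RootedPerm.restrict h (F (h + 1)) = F h) :
    ∃ P : RootedPerm,
      (∀ h : ℕ, 1 ≤ h → RootedPerm.restrict h P = F h) ∧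
      (∀ Q : RootedPerm, (∀ h : ℕ, 1 ≤ h → RootedPerm.restrict h Q = F h) → Q = P) ∧
      Filter.Tendsto (fun h : ℕ => localDist (F h) P) Filter.atTop (𝓝 0) := by
  classical
  -- each F h is supported in [-h, h]
  have hb : ∀ h : ℕ, 1 ≤ h → (F h).A ⊆ Set.Icc (-(h : ℤ)) (h : ℤ) := by
    intro h hh x hx
    rw [← hcons h hh] at hx
    exact hx.2
  -- the family is consistent at all scales
  have hFk : ∀ h k : ℕ, 1 ≤ h → h ≤ k → RootedPerm.restrict h (F k) = F h := by
    intro h k hh hhk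
    induction k, hhk using Nat.le_induction with
    | base => exact restrict_eq_self (hb h hh)
    | succ k hk ih =>
      have h1k : 1 ≤ k := le_trans hh hk
      rw [← restrict_restrict (F (k + 1)) hk, hcons k h1k, ih]
  have hA_mono : ∀ h k : ℕ, 1 ≤ h → h ≤ k → (F h).A ⊆ (F k).A := by
    intro h k hh hhk x hx
    rw [← hFk h k hh hhk] at hx
    exact hx.1
  have hr_mono : ∀ h k : ℕ, 1 ≤ h → h ≤ k → ∀ x y : ℤ, (F h).r x y → (F k).r x y := by
    intro h k hh hhk x y hxy
    rw [← hFk h k hh hhk] at hxy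
    exact hxy.1
  set P : RootedPerm := limitPerm F hA_mono hr_mono with hPdef
  -- main property: the restrictions of P are the F h
  have hmain : ∀ h : ℕ, 1 ≤ h → RootedPerm.restrict h P = F h := by
    intro h hh
    apply RootedPerm.ext'
    · show P.A ∩ _ = (F h).A
      ext x
      constructor
      · rintro ⟨⟨k, hk, hxk⟩, hxI⟩
        rcases le_total k h with hkh | hhk
        · exact hA_mono k h hk hkh hxk
        · rw [← hFk h k hh hhk]
          exact ⟨hxk, hxI⟩
      · intro hx
        exact ⟨⟨h, hh, hx⟩, hb h hh hx⟩
    · funext x y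
      apply propext
      show (∃ k : ℕ, 1 ≤ k ∧ (F k).r x y) ∧ _ ∧ _ ↔ (F h).r x y
      constructor
      · rintro ⟨⟨k, hk, hxy⟩, hxI, hyI⟩
        have hm : (F (max h k)).r x y := hr_mono k _ hk (le_max_right _ _) _ _ hxy
        have := hFk h (max h k) hh (le_max_left _ _)
        rw [← this]
        exact ⟨hm, hxI, hyI⟩
      · intro hxy
        exact ⟨⟨h, hh, hxy⟩, hb h hh ((F h).supp hxy).1, hb h hh ((F h).supp hxy).2⟩
  refine ⟨P, hmain, ?_, ?_⟩
  · -- uniqueness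
    intro Q hQ
    apply eq_of_restrict_eq
    intro h hh
    rw [hQ h hh, hmain h hh]
  · -- convergence
    have hbound : ∀ h : ℕ, 1 ≤ h → localDist (F h) P ≤ (2 : ℝ)⁻¹ ^ h := by
      intro h hh
      unfold localDist
      split
      · positivity
      · rename_i hall
        push_neg at hall
        obtain ⟨k₀, hk₀1, hk₀ne⟩ := hall
        set S := {k : ℕ | 1 ≤ k ∧ RootedPerm.restrict k (F h) = RootedPerm.restrict k P}
          with hS
        have hk₀h : h < k₀ := by
          by_contra hle
          push_neg at hle
          apply hk₀ne
          calc RootedPerm.restrict k₀ (F h)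
              = RootedPerm.restrict k₀ (RootedPerm.restrict h P) := by rw [hmain h hh]
            _ = RootedPerm.restrict k₀ P := restrict_restrict P hle
        have hub : ∀ k ∈ S, k ≤ k₀ := by
          intro k hk
          by_contra hgt
          push_neg at hgt
          have hkk₀ : k₀ ≤ k := le_of_lt hgt
          have hhk : h ≤ k := le_trans (le_of_lt hk₀h) hkk₀
          have h1k : 1 ≤ k := le_trans hh hhk
          -- from k ∈ S : F h = F k
          have hFhFk : F h = F k := by
            have e1 : RootedPerm.restrict k (F h) = F h :=
              restrict_eq_self (fun x hx => Icc_mono_int hhk (hb h hh hx))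
            have e2 : RootedPerm.restrict k P = F k := hmain k h1k
            rw [← e1, hk.2, e2]
          apply hk₀ne
          calc RootedPerm.restrict k₀ (F h)
              = RootedPerm.restrict k₀ (F k) := by rw [hFhFk]
            _ = F k₀ := hFk k₀ k hk₀1 hkk₀
            _ = RootedPerm.restrict k₀ P := (hmain k₀ hk₀1).symm
        have hhS : h ∈ S := by
          constructor
          · exact hh
          · rw [hmain h hh]
            exact restrict_eq_self (hb h hh)
        have hbdd : BddAbove S := ⟨k₀, hub⟩
        have hle : h ≤ sSup S := le_csSup hbdd hhS
        exact pow_le_pow_of_le_one (by norm_num) (by norm_num) hle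
    have hnonneg : ∀ h : ℕ, 0 ≤ localDist (F h) P := by
      intro h
      unfold localDist
      split
      · exact le_refl 0
      · positivity
    refine squeeze_zero' (g := fun h : ℕ => (2 : ℝ)⁻¹ ^ h)
      (Filter.Eventually.of_forall hnonneg) ?_ ?_
    · filter_upwards [Filter.eventually_ge_atTop 1] with h hh
      exact hbound h hh
    · exact tendsto_pow_atTop_nhds_zero_of_lt_one (by norm_num) (by norm_num)
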